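/- Fix α > 0. For n ∈ ℕ let C_n = { n·e^{2πik/(n+1)} ∈ ℂ : k = 0,…,n } ⊂ ℝ², and for x ∈ ℝ² with x ∉ C_n define Z_n(x) = Σ_{y∈C_n} |y − x|^{−2−α}, where |·| is the Euclidean norm. Then there exists a constant a > 1, depending only on α, such that for all integers m, n ≥ 1 with m ≠ n and all x ∈ C_m: if m < n then a^{−1}·(n−m)^{−1−α} ≤ Z_n(x) ≤ a·(n−m)^{−1−α}, and if m > n then a^{−1}·n/(m·(m−n)^{1+α}) ≤ Z_n(x) ≤ a·n/(m·(m−n)^{1+α}). -/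

import Mathlib

open Complex

/-- The finite set `C_n = { n·e^{2πik/(n+1)} : k = 0,…,n } ⊆ ℂ`. -/
noncomputable def circFin (n : ℕ) : Finset ℂ :=
  (Finset.range (n + 1)).image
    (fun k : ℕ => (n : ℂ) * Complex.exp (2 * (Real.pi : ℂ) * Complex.I * (k : ℂ) / ((n : ℂ) + 1)))

/-- `Z_n(x) = Σ_{y ∈ C_n} |y − x|^{−2−α}`. -/
noncomputable def Zcirc (α : ℝ) (n : ℕ) (x : ℂ) : ℝ :=
  ∑ y ∈ circFin n, ‖y - x‖ ^ (-(2 + α))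

/-!
Write `x = m e^{2πib}`. By the law of cosines
`|n e^{2πis} - m e^{2πib}|² = (n - m)² + 4nm sin²(π(s - b))`,
and after a cyclic relabelling of `C_n` its `i`-th point lies at angular offset
`2π(i + γ)/(n + 1)` from `x`, for some `γ ∈ [0, 1)`. Put `d = |n - m|`.
* If `n + 1 ≤ 4m`, Jordan's inequality `sin(πt) ≥ 2 min(t, 1 - t)` puts the `i`-th point at distance
  at least `√(d² + min(i, n - i)²)`, so `Z_n(x) ≲ d^{-α} Σ_i (d + i)^{-2} ≲ d^{-1-α}`.
* If `m ≤ 2n`, `|sin x| ≤ |x|` puts the first `d` points within distance `9d`, so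
  `Z_n(x) ≥ d (9d)^{-2-α}`.
* In the remaining ranges, the crude bounds `d ≤ |y - x| ≤ n + m` on the `n + 1` terms already give
  the right order of magnitude.
-/

open Finset Function Real

theorem Function.Periodic.sum_range_add_one {M : Type*} [AddCancelCommMonoid M] {f : ℝ → M}
    {N : ℕ} (hf : Periodic f N) : ∑ k ∈ range N, f (k + 1) = ∑ k ∈ range N, f k := by
  have h := (sum_range_succ' (fun k : ℕ => f k) N).symm.trans (sum_range_succ (fun k : ℕ => f k) N)
  push_cast at h
  rw [hf.eq] at h
  exact add_right_cancel h

theorem Function.Periodic.sum_range_add_int {M : Type*} [AddCancelCommMonoid M] {f : ℝ → M}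
    {N : ℕ} (hf : Periodic f N) (q : ℤ) : ∑ k ∈ range N, f (k + q) = ∑ k ∈ range N, f k := by
  induction q using Int.induction_on with
  | zero => simp
  | succ q ih =>
    rw [← ih, ← (hf.add_const ((q : ℤ) : ℝ)).sum_range_add_one]
    refine sum_congr rfl fun k _ => congrArg f ?_
    push_cast
    ring
  | pred q ih =>
    rw [← ih, ← (hf.add_const ((-q - 1 : ℤ) : ℝ)).sum_range_add_one]
    refine sum_congr rfl fun k _ => congrArg f ?_
    push_cast
    ring

theorem Function.Periodic.exists_sum_range_div_sub_eq {M : Type*} [AddCancelCommMonoid M]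
    {F : ℝ → M} (hF : Periodic F 1) {N : ℕ} (hN : N ≠ 0) (b : ℝ) :
    ∃ γ, 0 ≤ γ ∧ γ < 1 ∧ ∑ k ∈ range N, F (k / N - b) = ∑ i ∈ range N, F ((i + γ) / N) := by
  -- `k / N - b = (k - q + γ) / N` with `q = ⌈bN⌉` and `γ = q - bN`.
  set q := ⌈b * N⌉
  refine ⟨q - b * N, sub_nonneg.2 (Int.le_ceil _), by linarith [Int.ceil_lt_add_one (b * N)], ?_⟩
  have hper : Periodic (fun t => F ((t + (q - b * N)) / N)) N := by
    simpa only [one_mul] using (hF.div_const (N : ℝ)).add_const (q - b * N)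
  rw [← hper.sum_range_add_int (-q)]
  refine sum_congr rfl fun k _ => congrArg F ?_
  have hN' : (N : ℝ) ≠ 0 := Nat.cast_ne_zero.2 hN
  push_cast
  field_simp
  ring

theorem sum_range_inv_add_sq_le {d : ℕ} (hd : d ≠ 0) (N : ℕ) :
    ∑ i ∈ range N, (((d : ℝ) + i) ^ 2)⁻¹ ≤ 2 / d := by
  obtain ⟨k, rfl⟩ := Nat.exists_eq_add_of_le' (Nat.pos_of_ne_zero hd)
  have h := sum_Ioo_inv_sq_le (α := ℝ) k (k + 1 + N)
  rw [← Ico_add_one_left_eq_Ioo, sum_Ico_eq_sum_range, Nat.add_sub_cancel_left] at h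
  push_cast at h ⊢
  exact h

theorem rpow_neg_two_add_eq_div {d : ℝ} (hd : d ≠ 0) (α : ℝ) :
    d ^ (-(2 + α)) = d ^ (-(1 + α)) / d := by
  rw [show -(2 + α) = -(1 + α) - 1 by ring, rpow_sub_one hd]

theorem rpow_neg_two_add_le_mul_inv_sq {α d r : ℝ} (hα : 0 ≤ α) (hd : 0 < d) (hdr : d ≤ r) :
    r ^ (-(2 + α)) ≤ d ^ (-α) * (r ^ 2)⁻¹ := by
  have hr : 0 < r := hd.trans_le hdr
  rw [show -(2 + α) = -α + -2 by ring, rpow_add hr, rpow_neg hr.le 2, rpow_two]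
  exact mul_le_mul_of_nonneg_right (rpow_le_rpow_of_nonpos hd hdr (neg_nonpos.2 hα)) (by positivity)

theorem inv_sq_add_min_sq_le {d a b : ℝ} (hd : 0 < d) (ha : 0 ≤ a) (hb : 0 ≤ b) :
    (d ^ 2 + min a b ^ 2)⁻¹ ≤ 2 * (((d + a) ^ 2)⁻¹ + ((d + b) ^ 2)⁻¹) := by
  have key {c : ℝ} (hc : 0 ≤ c) : (d ^ 2 + c ^ 2)⁻¹ ≤ 2 * ((d + c) ^ 2)⁻¹ := by
    rw [inv_eq_one_div, inv_eq_one_div, mul_one_div,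
      div_le_div_iff₀ (by positivity) (by positivity)]
    nlinarith [sq_nonneg (d - c)]
  rcases min_cases a b with ⟨h, -⟩ | ⟨h, -⟩ <;> rw [h]
  · linarith [key ha, inv_nonneg.2 (sq_nonneg (d + b))]
  · linarith [key hb, inv_nonneg.2 (sq_nonneg (d + a))]

theorem sum_rpow_neg_le_of_sq_add_min_sq_le {α : ℝ} (hα : 0 ≤ α) {d n : ℕ} (hd : d ≠ 0)
    {r : ℕ → ℝ} (hr0 : ∀ i, 0 ≤ r i)
    (hr : ∀ i ∈ range (n + 1), (d : ℝ) ^ 2 + ((min i (n - i) : ℕ) : ℝ) ^ 2 ≤ r i ^ 2) :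
    ∑ i ∈ range (n + 1), r i ^ (-(2 + α)) ≤ 8 * (d : ℝ) ^ (-(1 + α)) := by
  have hd' : (0 : ℝ) < d := Nat.cast_pos.2 (Nat.pos_of_ne_zero hd)
  have hterm : ∀ i ∈ range (n + 1), r i ^ (-(2 + α))
      ≤ d ^ (-α) * (2 * ((((d : ℝ) + i) ^ 2)⁻¹ + (((d : ℝ) + (n - i : ℕ)) ^ 2)⁻¹)) := by
    intro i hi
    have hdr : (d : ℝ) ≤ r i := (pow_le_pow_iff_left₀ hd'.le (hr0 i) two_ne_zero).1
      (le_of_add_le_of_nonneg_left (hr i hi) (sq_nonneg _))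
    refine (rpow_neg_two_add_le_mul_inv_sq hα hd' hdr).trans
      (mul_le_mul_of_nonneg_left ?_ (by positivity))
    calc (r i ^ 2)⁻¹ ≤ ((d : ℝ) ^ 2 + ((min i (n - i) : ℕ) : ℝ) ^ 2)⁻¹ :=
          inv_anti₀ (by positivity) (hr i hi)
      _ ≤ _ := by
          rw [Nat.cast_min]
          exact inv_sq_add_min_sq_le hd' (Nat.cast_nonneg _) (Nat.cast_nonneg _)
  have hreflect : ∑ i ∈ range (n + 1), (((d : ℝ) + (n - i : ℕ)) ^ 2)⁻¹
      = ∑ i ∈ range (n + 1), (((d : ℝ) + i) ^ 2)⁻¹ := by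
    simpa using sum_range_reflect (fun i : ℕ => (((d : ℝ) + i) ^ 2)⁻¹) (n + 1)
  calc ∑ i ∈ range (n + 1), r i ^ (-(2 + α))
      ≤ ∑ i ∈ range (n + 1),
          d ^ (-α) * (2 * ((((d : ℝ) + i) ^ 2)⁻¹ + (((d : ℝ) + (n - i : ℕ)) ^ 2)⁻¹)) :=
        sum_le_sum hterm
    _ = d ^ (-α) * (4 * ∑ i ∈ range (n + 1), (((d : ℝ) + i) ^ 2)⁻¹) := by
        rw [← mul_sum, ← mul_sum, sum_add_distrib, hreflect]
        ring
    _ ≤ d ^ (-α) * (4 * (2 / d)) := by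
        gcongr
        exact sum_range_inv_add_sq_le hd _
    _ = 8 * (d : ℝ) ^ (-(1 + α)) := by
        rw [show -(1 + α) = -α - 1 by ring, rpow_sub_one hd'.ne']
        ring

theorem mul_rpow_neg_le_sum_rpow_neg {α c : ℝ} (hα : 0 ≤ α) (hc : 0 < c) {d N : ℕ} (hd : d ≠ 0)
    (hdN : d ≤ N) {r : ℕ → ℝ} (hr0 : ∀ i, 0 < r i) (hr : ∀ i ∈ range d, r i ≤ c * d) :
    c ^ (-(2 + α)) * (d : ℝ) ^ (-(1 + α)) ≤ ∑ i ∈ range N, r i ^ (-(2 + α)) := by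
  have hd' : (0 : ℝ) < d := Nat.cast_pos.2 (Nat.pos_of_ne_zero hd)
  calc c ^ (-(2 + α)) * (d : ℝ) ^ (-(1 + α)) = ∑ i ∈ range d, (c * d) ^ (-(2 + α)) := by
        rw [sum_const, card_range, nsmul_eq_mul, mul_rpow hc.le hd'.le,
          rpow_neg_two_add_eq_div hd'.ne']
        field_simp
    _ ≤ ∑ i ∈ range d, r i ^ (-(2 + α)) :=
        sum_le_sum fun i hi => rpow_le_rpow_of_nonpos (hr0 i) (hr i hi) (by linarith)
    _ ≤ ∑ i ∈ range N, r i ^ (-(2 + α)) :=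
        sum_le_sum_of_subset_of_nonneg (range_subset_range.2 hdN) fun i _ _ =>
          (rpow_pos_of_pos (hr0 i) _).le

theorem two_mul_le_sin_pi_mul {s : ℝ} (h0 : 0 ≤ s) (h1 : s ≤ 1 / 2) : 2 * s ≤ Real.sin (π * s) := by
  have h := Real.mul_le_sin (by positivity : 0 ≤ π * s) (by nlinarith [pi_pos])
  rwa [← mul_assoc, div_mul_cancel₀ _ pi_ne_zero] at h

theorem two_mul_min_le_sin_pi_mul {t : ℝ} (h0 : 0 ≤ t) (h1 : t ≤ 1) :
    2 * min t (1 - t) ≤ Real.sin (π * t) := by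
  rcases le_total t (1 / 2) with h | h
  · exact (mul_le_mul_of_nonneg_left (min_le_left _ _) two_pos.le).trans
      (two_mul_le_sin_pi_mul h0 h)
  · rw [← Real.sin_pi_sub, show π - π * t = π * (1 - t) by ring]
    exact (mul_le_mul_of_nonneg_left (min_le_right _ _) two_pos.le).trans
      (two_mul_le_sin_pi_mul (by linarith) (by linarith))

theorem norm_smul_sub_smul_sq {E : Type*} [NormedAddCommGroup E] [InnerProductSpace ℝ E]
    {u v : E} (hu : ‖u‖ = 1) (hv : ‖v‖ = 1) (r s : ℝ) :
    ‖r • u - s • v‖ ^ 2 = (r - s) ^ 2 + r * s * ‖u - v‖ ^ 2 := by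
  rw [norm_sub_sq_real, norm_sub_sq_real, norm_smul, norm_smul, real_inner_smul_left,
    real_inner_smul_right, hu, hv, Real.norm_eq_abs, Real.norm_eq_abs, mul_pow, mul_pow, sq_abs,
    sq_abs]
  ring

theorem norm_exp_two_pi_mul_I (t : ℝ) : ‖Complex.exp (2 * π * t * I)‖ = 1 := by
  simp [Complex.norm_exp]

-- By rotation invariance, the distance between points of moduli `n` and `m` whose arguments
-- differ by `2πt`.
noncomputable def ringDist (n m : ℕ) (t : ℝ) : ℝ :=
  ‖(n : ℂ) * Complex.exp (2 * π * t * I) - m‖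

theorem ringDist_sq (n m : ℕ) (t : ℝ) :
    ringDist n m t ^ 2 = ((n : ℝ) - m) ^ 2 + 4 * n * m * Real.sin (π * t) ^ 2 := by
  have hchord : ‖Complex.exp (2 * π * t * I) - 1‖ = ‖2 * Real.sin (π * t)‖ := by
    rw [← mul_div_cancel_left₀ (π * t) (two_ne_zero' ℝ), ← Complex.norm_exp_I_mul_ofReal_sub_one]
    push_cast
    ring_nf
  have h := norm_smul_sub_smul_sq (norm_exp_two_pi_mul_I t) norm_one (n : ℝ) m
  simp only [Complex.real_smul, Complex.ofReal_natCast, mul_one] at h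
  rw [ringDist, h, hchord, norm_mul, Real.norm_eq_abs, Real.norm_eq_abs, mul_pow, sq_abs, sq_abs]
  ring

theorem ringDist_add_one (n m : ℕ) (t : ℝ) : ringDist n m (t + 1) = ringDist n m t := by
  rw [ringDist, ringDist, show (2 * π * ((t + 1 : ℝ) : ℂ) * I) = 2 * π * t * I + 2 * π * I by
    push_cast; ring, Complex.exp_add, Complex.exp_two_pi_mul_I, mul_one]

theorem norm_sub_eq_ringDist (n m : ℕ) (s t : ℝ) :
    ‖(n : ℂ) * Complex.exp (2 * π * s * I) - m * Complex.exp (2 * π * t * I)‖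
      = ringDist n m (s - t) := by
  have hrot : (n : ℂ) * Complex.exp (2 * π * s * I) - m * Complex.exp (2 * π * t * I)
      = Complex.exp (2 * π * t * I) * (n * Complex.exp (2 * π * ((s - t : ℝ) : ℂ) * I) - m) := by
    rw [mul_sub, mul_left_comm, ← Complex.exp_add]
    push_cast
    ring_nf
  rw [hrot, norm_mul, ringDist, norm_exp_two_pi_mul_I, one_mul]

theorem abs_sub_le_ringDist (n m : ℕ) (t : ℝ) : |(n : ℝ) - m| ≤ ringDist n m t := by
  have h := abs_norm_sub_norm_le ((n : ℂ) * Complex.exp (2 * π * t * I)) (m : ℂ)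
  rwa [norm_mul, norm_exp_two_pi_mul_I, mul_one, Complex.norm_natCast, Complex.norm_natCast] at h

theorem ringDist_le_add (n m : ℕ) (t : ℝ) : ringDist n m t ≤ n + m := by
  have h := norm_sub_le ((n : ℂ) * Complex.exp (2 * π * t * I)) (m : ℂ)
  rwa [norm_mul, norm_exp_two_pi_mul_I, mul_one, Complex.norm_natCast, Complex.norm_natCast] at h

theorem sq_add_min_sq_le_ringDist_sq {n m i : ℕ} {γ : ℝ} (hγ0 : 0 ≤ γ) (hγ1 : γ < 1) (hi : i ≤ n)
    (hnm : (n + 1) ^ 2 ≤ 16 * n * m) :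
    ((n : ℝ) - m) ^ 2 + ((min i (n - i) : ℕ) : ℝ) ^ 2 ≤ ringDist n m ((i + γ) / (n + 1)) ^ 2 := by
  set μ : ℝ := ((min i (n - i) : ℕ) : ℝ)
  have hN : (0 : ℝ) < n + 1 := by positivity
  have hμ : μ / (n + 1) ≤ min ((i + γ) / (n + 1)) (1 - (i + γ) / (n + 1)) := by
    have hμi : μ ≤ i := Nat.cast_le.2 (min_le_left _ _)
    have hμn : μ ≤ n - i := (Nat.cast_le.2 (min_le_right _ _)).trans_eq (Nat.cast_sub hi)
    refine le_min (by gcongr; linarith) ?_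
    rw [one_sub_div hN.ne']
    gcongr
    linarith
  have hin : (i : ℝ) ≤ n := Nat.cast_le.2 hi
  have hsin : 2 * (μ / (n + 1)) ≤ Real.sin (π * ((i + γ) / (n + 1))) :=
    (mul_le_mul_of_nonneg_left hμ two_pos.le).trans <|
      two_mul_min_le_sin_pi_mul (by positivity) ((div_le_one hN).2 (by linarith))
  have hnm' : ((n : ℝ) + 1) ^ 2 ≤ 16 * n * m := by exact_mod_cast hnm
  rw [ringDist_sq]
  have hμsq : μ ^ 2 ≤ 4 * n * m * (2 * (μ / (n + 1))) ^ 2 := by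
    rw [show 4 * n * m * (2 * (μ / (n + 1))) ^ 2 = μ ^ 2 * (16 * n * m / (n + 1) ^ 2) by
      rw [mul_pow, div_pow]; ring]
    exact le_mul_of_one_le_right (sq_nonneg μ) ((one_le_div (by positivity)).2 hnm')
  gcongr
  exact hμsq.trans (by gcongr)

theorem ringDist_sq_le {n m i : ℕ} {γ : ℝ} (hγ0 : 0 ≤ γ) (hγ1 : γ ≤ 1) (hmn : m ≤ 2 * n) :
    ringDist n m ((i + γ) / (n + 1)) ^ 2 ≤ ((n : ℝ) - m) ^ 2 + 80 * (i + 1) ^ 2 := by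
  have hN : (0 : ℝ) < n + 1 := by positivity
  have hsin : Real.sin (π * ((i + γ) / (n + 1))) ^ 2 ≤ (π * ((i + 1) / (n + 1))) ^ 2 :=
    Real.sin_sq_le_sq.trans (pow_le_pow_left₀ (by positivity) (by gcongr) 2)
  have hmn' : (m : ℝ) ≤ 2 * n := by exact_mod_cast hmn
  have hπ : π ^ 2 ≤ 10 := by nlinarith [pi_lt_d2, pi_pos]
  have h4nm : 4 * (n : ℝ) * m ≤ 8 * (n + 1) ^ 2 := by nlinarith
  rw [ringDist_sq]
  calc ((n : ℝ) - m) ^ 2 + 4 * n * m * Real.sin (π * ((i + γ) / (n + 1))) ^ 2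
      ≤ ((n : ℝ) - m) ^ 2 + 8 * (n + 1) ^ 2 * (π * ((i + 1) / (n + 1))) ^ 2 := by gcongr
    _ = ((n : ℝ) - m) ^ 2 + 8 * π ^ 2 * (i + 1) ^ 2 := by field_simp
    _ ≤ ((n : ℝ) - m) ^ 2 + 80 * (i + 1) ^ 2 := by gcongr; linarith

theorem circFin_eq_image (n : ℕ) : circFin n =
    (range (n + 1)).image fun k : ℕ => (n : ℂ) * Complex.exp (2 * π * (k / (n + 1) : ℝ) * I) := by
  refine image_congr fun k _ => ?_
  push_cast
  ring_nf

theorem injOn_natCast_mul_exp_two_pi_div (n : ℕ) (hn : n ≠ 0) : Set.InjOn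
    (fun k : ℕ => (n : ℂ) * Complex.exp (2 * π * (k / (n + 1) : ℝ) * I)) (range (n + 1)) := by
  intro k hk l hl hkl
  have hζ := Complex.isPrimitiveRoot_exp (n + 1) n.succ_ne_zero
  have hpow (k : ℕ) : Complex.exp (2 * π * (k / (n + 1) : ℝ) * I)
      = Complex.exp (2 * π * I / (n + 1 : ℕ)) ^ k := by
    rw [← Complex.exp_nat_mul]
    push_cast
    ring_nf
  simp only [hpow] at hkl
  exact hζ.pow_inj (mem_range.1 hk) (mem_range.1 hl) (mul_left_cancel₀ (by exact_mod_cast hn) hkl)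

noncomputable def ringSum (α : ℝ) (n m : ℕ) (γ : ℝ) : ℝ :=
  ∑ i ∈ range (n + 1), ringDist n m ((i + γ) / (n + 1)) ^ (-(2 + α))

theorem Zcirc_eq_ringSum (α : ℝ) {n m : ℕ} (hn : n ≠ 0) {x : ℂ} (hx : x ∈ circFin m) :
    ∃ γ, 0 ≤ γ ∧ γ < 1 ∧ Zcirc α n x = ringSum α n m γ := by
  rw [circFin_eq_image, mem_image] at hx
  obtain ⟨j, -, rfl⟩ := hx
  have hF : Periodic (fun t => ringDist n m t ^ (-(2 + α))) 1 := fun t => by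
    simp only [ringDist_add_one]
  obtain ⟨γ, hγ0, hγ1, h⟩ :=
    hF.exists_sum_range_div_sub_eq (N := n + 1) n.succ_ne_zero (j / (m + 1))
  refine ⟨γ, hγ0, hγ1, ?_⟩
  rw [Zcirc, circFin_eq_image, sum_image (injOn_natCast_mul_exp_two_pi_div n hn)]
  simp only [norm_sub_eq_ringDist]
  push_cast at h ⊢
  exact h

section ringSum

variable {α : ℝ} {n m : ℕ} {γ : ℝ}

theorem ringSum_le_card_mul (hα : 0 ≤ α) (hnm : n ≠ m) (γ : ℝ) :
    ringSum α n m γ ≤ (n + 1) * |(n : ℝ) - m| ^ (-(2 + α)) := by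
  have hd : 0 < |(n : ℝ) - m| := abs_pos.2 (sub_ne_zero.2 (Nat.cast_injective.ne hnm))
  calc ringSum α n m γ ≤ ∑ i ∈ range (n + 1), |(n : ℝ) - m| ^ (-(2 + α)) :=
        sum_le_sum fun i _ => rpow_le_rpow_of_nonpos hd (abs_sub_le_ringDist _ _ _) (by linarith)
    _ = (n + 1) * |(n : ℝ) - m| ^ (-(2 + α)) := by simp

theorem card_mul_le_ringSum (hα : 0 ≤ α) (hnm : n ≠ m) (γ : ℝ) :
    (n + 1) * ((n : ℝ) + m) ^ (-(2 + α)) ≤ ringSum α n m γ := by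
  have hd : 0 < |(n : ℝ) - m| := abs_pos.2 (sub_ne_zero.2 (Nat.cast_injective.ne hnm))
  calc (n + 1) * ((n : ℝ) + m) ^ (-(2 + α)) = ∑ i ∈ range (n + 1), ((n : ℝ) + m) ^ (-(2 + α)) := by
        simp
    _ ≤ ringSum α n m γ := sum_le_sum fun i _ =>
        rpow_le_rpow_of_nonpos (hd.trans_le (abs_sub_le_ringDist _ _ _)) (ringDist_le_add _ _ _)
          (by linarith)

theorem ringSum_le_of_sq_le {d : ℕ} (hα : 0 ≤ α) (hd0 : d ≠ 0) (hd : |(n : ℝ) - m| = d)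
    (hγ0 : 0 ≤ γ) (hγ1 : γ < 1) (hnm : (n + 1) ^ 2 ≤ 16 * n * m) :
    ringSum α n m γ ≤ 8 * (d : ℝ) ^ (-(1 + α)) :=
  sum_rpow_neg_le_of_sq_add_min_sq_le hα hd0 (fun _ => norm_nonneg _) fun i hi => by
    rw [← hd, sq_abs]
    exact sq_add_min_sq_le_ringDist_sq hγ0 hγ1 (Nat.lt_succ_iff.1 (mem_range.1 hi)) hnm

theorem le_ringSum_of_le_two_mul {d : ℕ} (hα : 0 ≤ α) (hd0 : d ≠ 0) (hd : |(n : ℝ) - m| = d)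
    (hdn : d ≤ n + 1) (hγ0 : 0 ≤ γ) (hγ1 : γ < 1) (hmn : m ≤ 2 * n) :
    9 ^ (-(2 + α)) * (d : ℝ) ^ (-(1 + α)) ≤ ringSum α n m γ := by
  have hd' : (0 : ℝ) < d := Nat.cast_pos.2 (Nat.pos_of_ne_zero hd0)
  refine mul_rpow_neg_le_sum_rpow_neg hα (by norm_num) hd0 hdn
    (fun i => hd'.trans_le (hd ▸ abs_sub_le_ringDist _ _ _)) fun i hi => ?_
  have h := ringDist_sq_le (i := i) hγ0 hγ1.le hmn
  have hi' : (i : ℝ) + 1 ≤ d := by exact_mod_cast mem_range.1 hi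
  rw [← sq_abs ((n : ℝ) - m), hd] at h
  refine (pow_le_pow_iff_left₀ (norm_nonneg _) (by positivity) two_ne_zero).1 (h.trans ?_)
  nlinarith

end ringSum

theorem Zcirc_bounds_of_lt {α : ℝ} (hα : 0 ≤ α) {m n : ℕ} (hmn : m < n) {x : ℂ}
    (hx : x ∈ circFin m) :
    9 ^ (-(2 + α)) * ((n : ℝ) - m) ^ (-(1 + α)) ≤ Zcirc α n x ∧
      Zcirc α n x ≤ 8 * ((n : ℝ) - m) ^ (-(1 + α)) := by
  obtain ⟨d, rfl⟩ := Nat.exists_eq_add_of_le hmn.le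
  obtain ⟨γ, hγ0, hγ1, hZ⟩ := Zcirc_eq_ringSum α (n := m + d) (by omega) hx
  have hd0 : d ≠ 0 := by omega
  have hd' : (0 : ℝ) < d := Nat.cast_pos.2 (Nat.pos_of_ne_zero hd0)
  have hsub : ((m + d : ℕ) : ℝ) - m = d := by push_cast; ring
  have hd : |((m + d : ℕ) : ℝ) - m| = d := by rw [hsub, abs_of_pos hd']
  rw [hZ, hsub]
  refine ⟨le_ringSum_of_le_two_mul hα hd0 hd (by omega) hγ0 hγ1 (by omega), ?_⟩
  by_cases h4 : m + d + 1 ≤ 4 * m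
  · exact ringSum_le_of_sq_le hα hd0 hd hγ0 hγ1 (by nlinarith)
  calc ringSum α (m + d) m γ ≤ ((m + d : ℕ) + 1) * (d : ℝ) ^ (-(2 + α)) := by
        simpa only [hd] using ringSum_le_card_mul hα (n := m + d) (m := m) (by omega) γ
    _ = ((m + d : ℕ) + 1) / d * (d : ℝ) ^ (-(1 + α)) := by
        rw [rpow_neg_two_add_eq_div hd'.ne']; ring
    _ ≤ 8 * (d : ℝ) ^ (-(1 + α)) := by
        gcongr
        rw [div_le_iff₀ hd']
        exact_mod_cast (by omega : m + d + 1 ≤ 8 * d)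

theorem ringSum_bounds_of_le {α γ : ℝ} (hα : 0 ≤ α) {n d : ℕ} (hd0 : d ≠ 0) (hdn : d ≤ n)
    (hγ0 : 0 ≤ γ) (hγ1 : γ < 1) :
    9 ^ (-(2 + α)) * ((n : ℝ) / (n + d : ℕ) * (d : ℝ) ^ (-(1 + α))) ≤ ringSum α n (n + d) γ ∧
      ringSum α n (n + d) γ ≤ 16 * ((n : ℝ) / (n + d : ℕ) * (d : ℝ) ^ (-(1 + α))) := by
  have hd : |(n : ℝ) - (n + d : ℕ)| = d := by push_cast; simp
  have hP : 0 < (d : ℝ) ^ (-(1 + α)) := rpow_pos_of_pos (Nat.cast_pos.2 (Nat.pos_of_ne_zero hd0)) _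
  have hN : (0 : ℝ) < (n + d : ℕ) := by positivity
  constructor
  · calc 9 ^ (-(2 + α)) * ((n : ℝ) / (n + d : ℕ) * (d : ℝ) ^ (-(1 + α)))
        ≤ 9 ^ (-(2 + α)) * (d : ℝ) ^ (-(1 + α)) := by
          gcongr
          exact mul_le_of_le_one_left hP.le ((div_le_one hN).2 (by push_cast; linarith))
      _ ≤ ringSum α n (n + d) γ := le_ringSum_of_le_two_mul hα hd0 hd (by omega) hγ0 hγ1 (by omega)
  · calc ringSum α n (n + d) γ ≤ 8 * (d : ℝ) ^ (-(1 + α)) :=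
          ringSum_le_of_sq_le hα hd0 hd hγ0 hγ1 (by nlinarith [(by omega : 1 ≤ n)])
      _ ≤ 16 * ((n : ℝ) / (n + d : ℕ) * (d : ℝ) ^ (-(1 + α))) := by
          rw [← mul_assoc]
          gcongr
          rw [mul_div_assoc', le_div_iff₀ hN]
          exact_mod_cast (by omega : 8 * (n + d) ≤ 16 * n)

theorem ringSum_bounds_of_lt {α γ : ℝ} (hα : 0 ≤ α) {n d : ℕ} (hn : 1 ≤ n) (hnd : n < d) :
    9 ^ (-(2 + α)) * ((n : ℝ) / (n + d : ℕ) * (d : ℝ) ^ (-(1 + α))) ≤ ringSum α n (n + d) γ ∧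
      ringSum α n (n + d) γ ≤ 16 * ((n : ℝ) / (n + d : ℕ) * (d : ℝ) ^ (-(1 + α))) := by
  have hd : |(n : ℝ) - (n + d : ℕ)| = d := by push_cast; simp
  have hd' : (0 : ℝ) < d := by exact_mod_cast (by omega : 0 < d)
  have hnd' : (n : ℝ) < d := by exact_mod_cast hnd
  have hN : (0 : ℝ) < (n + d : ℕ) := by positivity
  constructor
  · calc 9 ^ (-(2 + α)) * ((n : ℝ) / (n + d : ℕ) * (d : ℝ) ^ (-(1 + α)))
        ≤ 9 ^ (-(2 + α)) * ((n + 1) / d * (d : ℝ) ^ (-(1 + α))) := by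
          gcongr 9 ^ (-(2 + α)) * (?_ * _)
          rw [div_le_div_iff₀ hN hd']
          exact_mod_cast (by nlinarith : n * d ≤ (n + 1) * (n + d))
      _ = (n + 1) * (9 * d) ^ (-(2 + α)) := by
          rw [mul_rpow (by norm_num) hd'.le, rpow_neg_two_add_eq_div hd'.ne']
          ring
      _ ≤ (n + 1) * ((n : ℝ) + (n + d : ℕ)) ^ (-(2 + α)) := by
          refine mul_le_mul_of_nonneg_left (rpow_le_rpow_of_nonpos (by positivity) ?_ (by linarith))
            (by positivity)
          push_cast
          linarith
      _ ≤ ringSum α n (n + d) γ := card_mul_le_ringSum hα (by omega) γ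
  · calc ringSum α n (n + d) γ ≤ (n + 1) * (d : ℝ) ^ (-(2 + α)) := by
          simpa only [hd] using ringSum_le_card_mul hα (n := n) (m := n + d) (by omega) γ
      _ = (n + 1) / d * (d : ℝ) ^ (-(1 + α)) := by
          rw [rpow_neg_two_add_eq_div hd'.ne']
          ring
      _ ≤ 16 * ((n : ℝ) / (n + d : ℕ) * (d : ℝ) ^ (-(1 + α))) := by
          rw [← mul_assoc]
          gcongr
          rw [mul_div_assoc', div_le_div_iff₀ hd' hN]
          exact_mod_cast (by nlinarith : (n + 1) * (n + d) ≤ 16 * n * d)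

theorem Zcirc_bounds_of_gt {α : ℝ} (hα : 0 ≤ α) {m n : ℕ} (hn : 1 ≤ n) (hnm : n < m) {x : ℂ}
    (hx : x ∈ circFin m) :
    9 ^ (-(2 + α)) * ((n : ℝ) / (m * ((m : ℝ) - n) ^ (1 + α))) ≤ Zcirc α n x ∧
      Zcirc α n x ≤ 16 * ((n : ℝ) / (m * ((m : ℝ) - n) ^ (1 + α))) := by
  obtain ⟨d, rfl⟩ := Nat.exists_eq_add_of_le hnm.le
  obtain ⟨γ, hγ0, hγ1, hZ⟩ := Zcirc_eq_ringSum α (n := n) (m := n + d) (by omega) hx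
  have hsub : ((n + d : ℕ) : ℝ) - n = d := by push_cast; ring
  rw [hZ, hsub, ← div_div, div_eq_mul_inv _ ((d : ℝ) ^ (1 + α)), ← rpow_neg (Nat.cast_nonneg _)]
  rcases le_or_gt d n with hdn | hnd
  · exact ringSum_bounds_of_le hα (by omega) hdn hγ0 hγ1
  · exact ringSum_bounds_of_lt hα hn hnd

/-- two-sided bounds on `Z_n(x)` for `x ∈ C_m`, `m ≠ n`. -/
theorem Zcirc_bounds (α : ℝ) (hα : 0 < α) :
    ∃ a : ℝ, 1 < a ∧ ∀ m n : ℕ, 1 ≤ m → 1 ≤ n → m ≠ n → ∀ x ∈ circFin m,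
      (m < n →
        a⁻¹ * ((n : ℝ) - (m : ℝ)) ^ (-(1 + α)) ≤ Zcirc α n x ∧
        Zcirc α n x ≤ a * ((n : ℝ) - (m : ℝ)) ^ (-(1 + α))) ∧
      (n < m →
        a⁻¹ * ((n : ℝ) / ((m : ℝ) * ((m : ℝ) - (n : ℝ)) ^ (1 + α))) ≤ Zcirc α n x ∧
        Zcirc α n x ≤ a * ((n : ℝ) / ((m : ℝ) * ((m : ℝ) - (n : ℝ)) ^ (1 + α)))) := by
  have h9 : (1 : ℝ) ≤ 9 ^ (2 + α) := one_le_rpow (by norm_num) (by linarith)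
  have hinv : (16 * 9 ^ (2 + α) : ℝ)⁻¹ ≤ 9 ^ (-(2 + α)) := by
    rw [rpow_neg (by norm_num)]
    exact inv_anti₀ (by positivity) (by linarith)
  refine ⟨16 * 9 ^ (2 + α), by linarith, fun m n _ hn _ x hx => ⟨fun h => ?_, fun h => ?_⟩⟩
  · obtain ⟨hl, hu⟩ := Zcirc_bounds_of_lt hα.le h hx
    have hX : 0 ≤ ((n : ℝ) - m) ^ (-(1 + α)) := rpow_nonneg (sub_nonneg.2 (Nat.cast_le.2 h.le)) _
    exact ⟨(mul_le_mul_of_nonneg_right hinv hX).trans hl,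
      hu.trans (mul_le_mul_of_nonneg_right (by linarith) hX)⟩
  · obtain ⟨hl, hu⟩ := Zcirc_bounds_of_gt hα.le hn h hx
    have hX : 0 ≤ (n : ℝ) / (m * ((m : ℝ) - n) ^ (1 + α)) := by
      have := rpow_nonneg (sub_nonneg.2 (Nat.cast_le.2 h.le)) (1 + α)
      positivity
    exact ⟨(mul_le_mul_of_nonneg_right hinv hX).trans hl,
      hu.trans (mul_le_mul_of_nonneg_right (by linarith) hX)⟩
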